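/- Under the stated setup, for every q ∈ [0, q₀] and every integer n ≥ 0, ∫ ψ dμ_q ≤ e^{2 q₀ C₀ n} ( e^{2 q₀ C₀ n} + D ρⁿ ) ( ψ̃ + C₀ D ρⁿ ). -/

import Mathlib

/-!
Since `0 ≤ q ≤ q₀` and `0 ≤ ψ ≤ C₀`, the potential `φ + qψ` is dominated by the constant shift
`φ + 2q₀C₀`, so `L_{φ+qψ}ⁿ g ≤ e^{2q₀C₀n} L_φⁿ g` for `g ≥ 0`; also `λ_q ≥ 1`, because
`L_{φ+qψ} 1 ≥ L_φ 1 = 1`. Integrating against the eigenmeasure `ν_q` then gives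
`∫ ψ dν_q ≤ λ_qⁿ ∫ ψ dν_q = ∫ L_{φ+qψ}ⁿ ψ dν_q ≤ e^{2q₀C₀n} (ψ̃ + C₀Dρⁿ)`, while the spectral gap
at `g = 1` gives `h_q ≤ λ_q⁻ⁿ L_{φ+qψ}ⁿ 1 + Dρⁿ ≤ e^{2q₀C₀n} + Dρⁿ`. Finally
`∫ ψ dμ_q = ∫ h_q ψ dν_q ≤ ‖h_q‖_∞ ∫ ψ dν_q`.
-/

open MeasureTheory Real ENNReal

namespace SFT

/-- The one-sided subshift of finite type determined by the 0-1 matrix `A`. -/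
def Space {s₀ : ℕ} (A : Matrix (Fin s₀) (Fin s₀) ℕ) : Type :=
  {ξ : ℕ → Fin s₀ // ∀ i, A (ξ i) (ξ (i + 1)) = 1}

variable {s₀ : ℕ} {A : Matrix (Fin s₀) (Fin s₀) ℕ}

instance : TopologicalSpace (Space A) :=
  inferInstanceAs (TopologicalSpace {ξ : ℕ → Fin s₀ // ∀ i, A (ξ i) (ξ (i + 1)) = 1})

noncomputable instance : MeasurableSpace (Space A) := borel _
instance : BorelSpace (Space A) := ⟨rfl⟩

/-- The shift map σ. -/
def shift (x : Space A) : Space A := ⟨fun i => x.1 (i + 1), fun i => x.2 (i + 1)⟩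

/-- `var_k g` as an extended real. -/
noncomputable def evar (g : Space A → ℝ) (k : ℕ) : ℝ≥0∞ :=
  ⨆ (ξ : Space A) (η : Space A) (_ : ∀ i ≤ k, ξ.1 i = η.1 i), ENNReal.ofReal |g ξ - g η|

/-- `|g|_θ` as an extended real. -/
noncomputable def eHolder (θ : ℝ) (g : Space A → ℝ) : ℝ≥0∞ :=
  ⨆ k : ℕ, evar g k / ENNReal.ofReal (θ ^ k)

/-- `|g|_∞` as an extended real. -/
noncomputable def eSup (g : Space A → ℝ) : ℝ≥0∞ :=
  ⨆ ξ : Space A, ENNReal.ofReal |g ξ|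

/-- `|g|_θ`. -/
noncomputable def holderNorm (θ : ℝ) (g : Space A → ℝ) : ℝ := (eHolder θ g).toReal

/-- `|g|_∞`. -/
noncomputable def supNorm (g : Space A → ℝ) : ℝ := (eSup g).toReal

/-- `‖g‖_θ = |g|_θ + |g|_∞`. -/
noncomputable def fNorm (θ : ℝ) (g : Space A → ℝ) : ℝ := holderNorm θ g + supNorm g

/-- Membership in `F_θ(Σ_A⁺)`: finiteness of `‖g‖_θ`. -/
def MemF (θ : ℝ) (g : Space A → ℝ) : Prop := eHolder θ g + eSup g < ⊤


instance shiftFiberFinite (x : Space A) : Finite {y : Space A // shift y = x} := by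
  apply Finite.of_injective (fun y : {y : Space A // shift y = x} => y.1.1 0)
  rintro ⟨y, hy⟩ ⟨z, hz⟩ h
  apply Subtype.ext
  apply Subtype.ext
  funext n
  cases n with
  | zero => exact h
  | succ i =>
    have h1 : y.1 (i + 1) = x.1 i := congrFun (congrArg Subtype.val hy) i
    have h2 : z.1 (i + 1) = x.1 i := congrFun (congrArg Subtype.val hz) i
    rw [h1, h2]

/-- The Ruelle transfer operator `(L_f g)(x) = Σ_{σ y = x} e^{f(y)} g(y)`. -/
noncomputable def transfer (f g : Space A → ℝ) (x : Space A) : ℝ :=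
  ∑' y : {y : Space A // shift y = x}, Real.exp (f y.1) * g y.1

/-- Two functions are cohomologous if they differ by a continuous coboundary. -/
def Cohomologous (u v : Space A → ℝ) : Prop :=
  ∃ w : Space A → ℝ, Continuous w ∧ ∀ x, u x = v x + w (shift x) - w x

/-- ψ is cohomologous to a constant. -/
def CohomToConst (ψ : Space A → ℝ) : Prop := ∃ c : ℝ, Cohomologous ψ fun _ => c

/-- A finite measurable partition of the space. -/
def IsPartition {k : ℕ} (P : Fin k → Set (Space A)) : Prop :=
  (∀ i, MeasurableSet (P i)) ∧ (Pairwise fun i j => Disjoint (P i) (P j)) ∧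
    (⋃ i, P i) = Set.univ

/-- Entropy of the n-th join `⋁_{j<n} σ^{-j} P` of a partition. -/
noncomputable def joinEntropy (m : Measure (Space A)) {k : ℕ} (P : Fin k → Set (Space A))
    (n : ℕ) : ℝ :=
  ∑ a : Fin n → Fin k,
    Real.negMulLog (m (⋂ j : Fin n, shift^[(j : ℕ)] ⁻¹' P (a j))).toReal

/-- Measure-theoretic (Kolmogorov–Sinai) entropy of `m` with respect to the shift. -/
noncomputable def entropy (m : Measure (Space A)) : ℝ :=
  sSup {h | ∃ k : ℕ, ∃ P : Fin k → Set (Space A), IsPartition P ∧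
    h = ⨅ n : ℕ, joinEntropy m P (n + 1) / (n + 1)}

/-- σ-invariance of a measure. -/
def IsInvariant (m : Measure (Space A)) : Prop := m.map shift = m

/-- Topological pressure via the variational principle. -/
noncomputable def pressure (g : Space A → ℝ) : ℝ :=
  sSup {r | ∃ m : Measure (Space A), IsProbabilityMeasure m ∧ IsInvariant m ∧
    r = entropy m + ∫ x, g x ∂m}

/-- `m` is an equilibrium state of `g`. -/
def IsEqm (g : Space A → ℝ) (m : Measure (Space A)) : Prop :=
  IsProbabilityMeasure m ∧ IsInvariant m ∧ entropy m + ∫ x, g x ∂m = pressure g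

/-- The Ruelle–Perron–Frobenius data of `f`: an eigenvalue `lam > 0`, a probability
eigenmeasure `ν` of the dual operator, and a positive normalised eigenfunction `h ∈ F_θ`. -/
def IsRPF (θ : ℝ) (f : Space A → ℝ) (lam : ℝ) (ν : Measure (Space A))
    (h : Space A → ℝ) : Prop :=
  0 < lam ∧ IsProbabilityMeasure ν ∧
    (∀ g : Space A → ℝ, Continuous g → ∫ x, transfer f g x ∂ν = lam * ∫ x, g x ∂ν) ∧
    MemF θ h ∧ (∀ x, 0 < h x) ∧ (∀ x, transfer f h x = lam * h x) ∧ (∫ x, h x ∂ν) = 1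

instance : CompactSpace (Space A) := by
  refine isCompact_iff_compactSpace.mp (IsClosed.isCompact ?_)
  show IsClosed {ξ : ℕ → Fin s₀ | ∀ i, A (ξ i) (ξ (i + 1)) = 1}
  rw [Set.ofPred_forall]
  refine isClosed_iInter fun i => ?_
  have hpair : Continuous fun x : ℕ → Fin s₀ => (x i, x (i + 1)) := by fun_prop
  exact (isClosed_discrete {p : Fin s₀ × Fin s₀ | A p.1 p.2 = 1}).preimage hpair

lemma continuous_coord (n : ℕ) : Continuous fun x : Space A => x.1 n :=
  (continuous_apply n).comp continuous_subtype_val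

lemma eventually_nhds_coord_eq (x : Space A) (k : ℕ) :
    ∀ᶠ y in nhds x, ∀ i ≤ k, y.1 i = x.1 i := by
  simp only [← Finset.mem_range_succ_iff]
  exact (Finset.eventually_all _).2 fun i _ =>
    (continuous_coord i).continuousAt.eventually (isOpen_discrete {x.1 i} |>.mem_nhds rfl)

/-- `cons i x` prepends the symbol `i` to `x`; when `A i (x 0) ≠ 1` the result would not be
admissible, and `cons i x` is then `x` itself. -/
noncomputable def cons (i : Fin s₀) (x : Space A) : Space A :=
  if h : A i (x.1 0) = 1 then
    ⟨fun n => Nat.casesOn n i x.1, by rintro (_ | n); exacts [h, x.2 n]⟩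
  else x

lemma shift_cons {i : Fin s₀} {x : Space A} (h : A i (x.1 0) = 1) : shift (cons i x) = x := by
  erw [cons, dif_pos h]
  rfl

lemma cons_val_zero {i : Fin s₀} {x : Space A} (h : A i (x.1 0) = 1) : (cons i x).1 0 = i := by
  erw [cons, dif_pos h]
  rfl

lemma cons_shift (y : Space A) : cons (y.1 0) (shift y) = y := by
  erw [cons, dif_pos (y.2 0)]
  exact Subtype.ext (funext fun n => by cases n <;> rfl)

noncomputable def fiberEquiv (x : Space A) :
    {i : Fin s₀ // A i (x.1 0) = 1} ≃ {y : Space A // shift y = x} where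
  toFun i := ⟨cons i.1 x, shift_cons i.2⟩
  invFun y := ⟨y.1.1 0, by obtain ⟨y, rfl⟩ := y; exact y.2 0⟩
  left_inv i := Subtype.ext (cons_val_zero i.2)
  right_inv y := by obtain ⟨y, rfl⟩ := y; exact Subtype.ext (cons_shift y)

lemma transfer_eq_sum (f g : Space A → ℝ) (x : Space A) :
    transfer f g x = ∑ i ∈ Finset.univ.filter fun i : Fin s₀ => A i (x.1 0) = 1,
      Real.exp (f (cons i x)) * g (cons i x) := by
  rw [transfer, ← (fiberEquiv x).tsum_eq, tsum_fintype,
    Finset.sum_subtype _ (p := fun i => A i (x.1 0) = 1) (by simp)]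
  rfl

lemma continuousAt_cons {i : Fin s₀} {x : Space A} (h : A i (x.1 0) = 1) :
    ContinuousAt (cons i) x := by
  have hprepend : Continuous fun y : Space A => (fun n => Nat.casesOn n i y.1 : ℕ → Fin s₀) :=
    continuous_pi fun n => by cases n; exacts [continuous_const, continuous_coord _]
  refine Topology.IsInducing.subtypeVal.continuousAt_iff.2 (hprepend.continuousAt.congr ?_)
  filter_upwards [eventually_nhds_coord_eq x 0] with y hy
  show _ = (cons i y).1
  erw [cons, dif_pos (hy 0 le_rfl ▸ h)]

lemma continuous_transfer {f g : Space A → ℝ} (hf : Continuous f) (hg : Continuous g) :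
    Continuous (transfer f g) := by
  refine continuous_iff_continuousAt.2 fun x => ?_
  have hsum : ContinuousAt (fun y => ∑ i ∈ Finset.univ.filter fun i : Fin s₀ => A i (x.1 0) = 1,
      Real.exp (f (cons i y)) * g (cons i y)) x := by
    refine tendsto_finsetSum _ fun i hi => ?_
    have hcons := continuousAt_cons (Finset.mem_filter.1 hi).2
    exact (Real.continuous_exp.continuousAt.comp (hf.continuousAt.comp hcons)).mul
      (hg.continuousAt.comp hcons)
  refine hsum.congr ?_
  filter_upwards [eventually_nhds_coord_eq x 0] with y hy
  rw [transfer_eq_sum, hy 0 le_rfl]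

lemma continuous_iterate_transfer {f g : Space A → ℝ} (hf : Continuous f) (hg : Continuous g)
    (n : ℕ) : Continuous ((transfer f)^[n] g) := by
  induction n with
  | zero => exact hg
  | succ n ih => rw [Function.iterate_succ_apply']; exact continuous_transfer hf ih

lemma transfer_const_mul (f g : Space A → ℝ) (c : ℝ) :
    transfer f (fun y => c * g y) = fun x => c * transfer f g x := by
  funext x
  simp only [transfer, ← tsum_mul_left, mul_left_comm]

lemma transfer_add_const (f g : Space A → ℝ) (c : ℝ) :
    transfer (fun y => f y + c) g = fun x => Real.exp c * transfer f g x := by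
  funext x
  simp only [transfer, ← tsum_mul_left, Real.exp_add, mul_comm, mul_left_comm]

lemma transfer_nonneg (f : Space A → ℝ) {g : Space A → ℝ} (hg : ∀ y, 0 ≤ g y) (x : Space A) :
    0 ≤ transfer f g x :=
  tsum_nonneg fun y => mul_nonneg (Real.exp_pos _).le (hg y.1)

lemma transfer_le_transfer {f₁ f₂ g₁ g₂ : Space A → ℝ} (hf : ∀ y, f₁ y ≤ f₂ y)
    (hg₁ : ∀ y, 0 ≤ g₁ y) (hg : ∀ y, g₁ y ≤ g₂ y) (x : Space A) :
    transfer f₁ g₁ x ≤ transfer f₂ g₂ x :=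
  Summable.tsum_le_tsum (fun y => mul_le_mul (Real.exp_le_exp.2 (hf y.1)) (hg y.1) (hg₁ y.1)
    (Real.exp_pos _).le) .of_finite .of_finite

lemma iterate_transfer_nonneg (f : Space A → ℝ) {g : Space A → ℝ} (hg : ∀ y, 0 ≤ g y) (n : ℕ)
    (x : Space A) : 0 ≤ (transfer f)^[n] g x := by
  induction n generalizing x with
  | zero => exact hg x
  | succ n ih => rw [Function.iterate_succ_apply']; exact transfer_nonneg f ih x

lemma iterate_transfer_le_iterate_transfer {f₁ f₂ g₁ g₂ : Space A → ℝ} (hf : ∀ y, f₁ y ≤ f₂ y)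
    (hg₁ : ∀ y, 0 ≤ g₁ y) (hg : ∀ y, g₁ y ≤ g₂ y) (n : ℕ) (x : Space A) :
    (transfer f₁)^[n] g₁ x ≤ (transfer f₂)^[n] g₂ x := by
  induction n generalizing x with
  | zero => exact hg x
  | succ n ih =>
    simp only [Function.iterate_succ_apply']
    exact transfer_le_transfer hf (iterate_transfer_nonneg f₁ hg₁ n) ih x

lemma iterate_transfer_add_const (f g : Space A → ℝ) (c : ℝ) (n : ℕ) :
    (transfer fun y => f y + c)^[n] g = fun x => Real.exp (c * n) * (transfer f)^[n] g x := by
  induction n with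
  | zero => simp
  | succ n ih =>
    funext x
    simp only [Function.iterate_succ_apply', ih, transfer_const_mul, transfer_add_const]
    rw [← mul_assoc, ← Real.exp_add]
    push_cast
    ring_nf

lemma iterate_transfer_le_exp_mul_iterate_transfer {f φ g : Space A → ℝ} {c : ℝ}
    (hf : ∀ y, f y ≤ φ y + c) (hg : ∀ y, 0 ≤ g y) (n : ℕ) (x : Space A) :
    (transfer f)^[n] g x ≤ Real.exp (c * n) * (transfer φ)^[n] g x := by
  simpa only [iterate_transfer_add_const] using
    iterate_transfer_le_iterate_transfer hf hg (fun _ => le_rfl) n x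

lemma abs_sub_le_holderNorm_mul {θ : ℝ} (hθ : 0 < θ) {g : Space A → ℝ} (hg : MemF θ g)
    {k : ℕ} {x y : Space A} (h : ∀ i ≤ k, y.1 i = x.1 i) :
    |g y - g x| ≤ holderNorm θ g * θ ^ k := by
  have hfin : eHolder θ g ≠ ⊤ := (lt_of_le_of_lt le_self_add hg).ne
  have hθk : ENNReal.ofReal (θ ^ k) ≠ 0 := by simp [pow_pos hθ k]
  rw [holderNorm, ← ENNReal.toReal_ofReal (pow_nonneg hθ.le k), ← ENNReal.toReal_mul,
    ← ENNReal.ofReal_le_iff_le_toReal (ENNReal.mul_ne_top hfin ENNReal.ofReal_ne_top)]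
  calc ENNReal.ofReal |g y - g x| ≤ evar g k := le_iSup₂_of_le y x (le_iSup_of_le h le_rfl)
    _ ≤ eHolder θ g * ENNReal.ofReal (θ ^ k) :=
      (ENNReal.div_le_iff hθk ENNReal.ofReal_ne_top).1
        (le_iSup (fun k => evar g k / ENNReal.ofReal (θ ^ k)) k)

theorem MemF.continuous {θ : ℝ} (hθ0 : 0 < θ) (hθ1 : θ < 1) {g : Space A → ℝ}
    (hg : MemF θ g) : Continuous g := by
  refine continuous_iff_continuousAt.2 fun x => Metric.tendsto_nhds.2 fun ε hε => ?_
  have hsmall : Filter.Tendsto (fun k => holderNorm θ g * θ ^ k) Filter.atTop (nhds 0) := by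
    simpa using (tendsto_pow_atTop_nhds_zero_of_lt_one hθ0.le hθ1).const_mul (holderNorm θ g)
  obtain ⟨k, hk⟩ := (hsmall.eventually (gt_mem_nhds hε)).exists
  filter_upwards [eventually_nhds_coord_eq x k] with y hy
  rw [Real.dist_eq]
  exact (abs_sub_le_holderNorm_mul hθ0 hg hy).trans_lt hk

lemma abs_le_supNorm {g : Space A → ℝ} (hg : Continuous g) (x : Space A) :
    |g x| ≤ supNorm g := by
  obtain ⟨B, hB⟩ := (isCompact_range (continuous_abs.comp hg)).bddAbove
  have hfin : eSup g ≠ ⊤ := ne_top_of_le_ne_top ENNReal.ofReal_ne_top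
    (iSup_le fun y => ENNReal.ofReal_le_ofReal (hB ⟨y, rfl⟩))
  exact (ENNReal.ofReal_le_iff_le_toReal hfin).1 (le_iSup (fun y => ENNReal.ofReal |g y|) x)

lemma abs_le_fNorm (θ : ℝ) {g : Space A → ℝ} (hg : Continuous g) (x : Space A) :
    |g x| ≤ fNorm θ g :=
  (abs_le_supNorm hg x).trans (le_add_of_nonneg_left ENNReal.toReal_nonneg)

lemma eHolder_const (θ c : ℝ) : eHolder θ (fun _ : Space A => c) = 0 := by
  simp [eHolder, evar]

lemma eSup_const_le (c : ℝ) : eSup (fun _ : Space A => c) ≤ ENNReal.ofReal |c| :=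
  iSup_le fun _ => le_rfl

lemma memF_const (θ c : ℝ) : MemF θ (fun _ : Space A => c) := by
  rw [MemF, eHolder_const, zero_add]
  exact (eSup_const_le c).trans_lt ENNReal.ofReal_lt_top

lemma fNorm_const_le (θ c : ℝ) : fNorm θ (fun _ : Space A => c) ≤ |c| := by
  rw [fNorm, holderNorm, eHolder_const, ENNReal.toReal_zero, zero_add, supNorm]
  exact ENNReal.toReal_le_of_le_ofReal (abs_nonneg c) (eSup_const_le c)

theorem _root_.Continuous.integrable_of_compactSpace {X : Type*} [TopologicalSpace X]
    [CompactSpace X] [MeasurableSpace X] [OpensMeasurableSpace X] {ν : Measure X}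
    [IsFiniteMeasure ν] {g : X → ℝ} (hg : Continuous g) : Integrable g ν :=
  hg.integrable_of_hasCompactSupport (HasCompactSupport.of_compactSpace g)

lemma integral_withDensity_ofReal {X : Type*} [MeasurableSpace X] {ν : Measure X} {h : X → ℝ}
    (hh : Measurable h) (hpos : ∀ x, 0 ≤ h x) (g : X → ℝ) :
    ∫ x, g x ∂(ν.withDensity fun x => ENNReal.ofReal (h x)) = ∫ x, h x * g x ∂ν := by
  rw [integral_withDensity_eq_integral_toReal_smul (by fun_prop)
    (.of_forall fun _ => ENNReal.ofReal_lt_top)]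
  simp only [ENNReal.toReal_ofReal (hpos _), smul_eq_mul]

lemma integral_mul_le_of_le {X : Type*} [TopologicalSpace X] [CompactSpace X]
    [MeasurableSpace X] [OpensMeasurableSpace X] {ν : Measure X} [IsFiniteMeasure ν]
    {h g : X → ℝ} (hh : Continuous h) (hg : Continuous g) (hg0 : ∀ x, 0 ≤ g x) {K : ℝ}
    (hK : ∀ x, h x ≤ K) : ∫ x, h x * g x ∂ν ≤ K * ∫ x, g x ∂ν := by
  rw [← integral_const_mul]
  exact integral_mono (hh.mul hg).integrable_of_compactSpace
    (continuous_const.mul hg).integrable_of_compactSpace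
    fun x => mul_le_mul_of_nonneg_right (hK x) (hg0 x)

section Eigendata

variable {f : Space A → ℝ} {lam : ℝ} {ν : Measure (Space A)}

lemma integral_iterate_transfer {g : Space A → ℝ} (hf : Continuous f)
    (hid : ∀ g : Space A → ℝ, Continuous g → ∫ x, transfer f g x ∂ν = lam * ∫ x, g x ∂ν)
    (hg : Continuous g) (n : ℕ) : ∫ x, (transfer f)^[n] g x ∂ν = lam ^ n * ∫ x, g x ∂ν := by
  induction n with
  | zero => simp
  | succ n ih =>
    rw [Function.iterate_succ_apply', hid _ (continuous_iterate_transfer hf hg n), ih, pow_succ',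
      mul_assoc]

lemma one_le_of_one_le_transfer_one [IsProbabilityMeasure ν] (hf : Continuous f)
    (hid : ∀ g : Space A → ℝ, Continuous g → ∫ x, transfer f g x ∂ν = lam * ∫ x, g x ∂ν)
    (h1 : ∀ x, 1 ≤ transfer f (fun _ => 1) x) : 1 ≤ lam := by
  have hmono := integral_mono (integrable_const (1 : ℝ))
    ((continuous_transfer hf continuous_const).integrable_of_compactSpace (ν := ν)) h1
  simpa [hid _ continuous_const] using hmono

lemma integral_le_of_iterate_transfer_le [IsProbabilityMeasure ν] (hf : Continuous f)
    (hid : ∀ g : Space A → ℝ, Continuous g → ∫ x, transfer f g x ∂ν = lam * ∫ x, g x ∂ν)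
    (hlam : 1 ≤ lam) {g : Space A → ℝ} (hg : Continuous g) (hg0 : ∀ x, 0 ≤ g x) {n : ℕ} {B : ℝ}
    (hB : ∀ x, (transfer f)^[n] g x ≤ B) : ∫ x, g x ∂ν ≤ B :=
  calc ∫ x, g x ∂ν ≤ lam ^ n * ∫ x, g x ∂ν :=
        le_mul_of_one_le_left (integral_nonneg hg0) (one_le_pow₀ hlam)
    _ = ∫ x, (transfer f)^[n] g x ∂ν := (integral_iterate_transfer hf hid hg n).symm
    _ ≤ ∫ _, B ∂ν := integral_mono (continuous_iterate_transfer hf hg n).integrable_of_compactSpace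
        (integrable_const B) hB
    _ = B := by simp

lemma le_iterate_transfer_one_add_of_fNorm_sub_le [IsProbabilityMeasure ν] {θ D : ℝ}
    (hf : Continuous f) (hlam : 1 ≤ lam) {h : Space A → ℝ} (hh : Continuous h) (hD : 0 ≤ D)
    {n : ℕ} (hgap : fNorm θ (fun x => (transfer f)^[n] (fun _ => 1) x / lam ^ n
      - h x * ∫ _, (1 : ℝ) ∂ν) ≤ D * fNorm θ (fun _ : Space A => (1 : ℝ))) (x : Space A) :
    h x ≤ (transfer f)^[n] (fun _ => 1) x + D := by
  have hcont : Continuous fun y => (transfer f)^[n] (fun _ => 1) y / lam ^ n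
      - h y * ∫ _, (1 : ℝ) ∂ν :=
    ((continuous_iterate_transfer hf continuous_const n).div_const _).sub
      (hh.mul continuous_const)
  have hdiff := (neg_le_abs _).trans ((abs_le_fNorm θ hcont x).trans hgap)
  have hone : D * fNorm θ (fun _ : Space A => (1 : ℝ)) ≤ D :=
    mul_le_of_le_one_right hD ((fNorm_const_le θ 1).trans_eq abs_one)
  have hdiv : (transfer f)^[n] (fun _ => 1) x / lam ^ n ≤ (transfer f)^[n] (fun _ => 1) x :=
    div_le_self (iterate_transfer_nonneg f (fun _ => zero_le_one) n x) (one_le_pow₀ hlam)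
  simp only [integral_const, probReal_univ, smul_eq_mul, mul_one] at hdiff
  linarith

end Eigendata

theorem statement13_general
    {s₀ : ℕ} {A : Matrix (Fin s₀) (Fin s₀) ℕ} {θ : ℝ}
    (hθ0 : 0 < θ) (hθ1 : θ < 1)
    (φ ψ : Space A → ℝ) (hφ : MemF θ φ) (hψ : MemF θ ψ)
    (hL1 : transfer φ (fun _ => 1) = fun _ => 1) (hψ0 : ∀ x, 0 ≤ ψ x)
    (ψt : ℝ)
    (b C₀ : ℝ)
    (hC₀ : C₀ = fNorm θ φ + 2 * max (supNorm ψ) 1)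
    (lam : ℝ → ℝ) (ν : ℝ → Measure (Space A)) (hq : ℝ → Space A → ℝ)
    (hRPF : ∀ q : ℝ, IsRPF θ (fun x => φ x + q * ψ x) (lam q) (ν q) (hq q))
    (D ρ : ℝ) (hD1 : 1 ≤ D) (hρ : ρ ∈ Set.Ioo (0:ℝ) 1)
    (hgap : ∀ q : ℝ, |q| ≤ 1 / b → ∀ g : Space A → ℝ, MemF θ g → ∀ n : ℕ,
      fNorm θ (fun x => (transfer (fun y => φ y + q * ψ y))^[n] g x / lam q ^ n
          - hq q x * ∫ y, g y ∂(ν q)) ≤ D * ρ ^ n * fNorm θ g)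
    (hLψ : ∀ n : ℕ, supNorm (fun x => (transfer φ)^[n] ψ x - ψt) ≤ C₀ * D * ρ ^ n)
    (q₀ : ℝ) (hq₀b : q₀ ≤ 1 / b) :
    ∀ q ∈ Set.Icc (0 : ℝ) q₀, ∀ n : ℕ,
      (∫ x, ψ x ∂((ν q).withDensity fun x => ENNReal.ofReal (hq q x))) ≤
        Real.exp (2 * q₀ * C₀ * n) * (Real.exp (2 * q₀ * C₀ * n) + D * ρ ^ n) *
          (ψt + C₀ * D * ρ ^ n) := by
  intro q ⟨hq0, hqq₀⟩ n
  obtain ⟨-, hν, hid, hmemh, hpos, -, -⟩ := hRPF q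
  have hφc := hφ.continuous hθ0 hθ1
  have hψc := hψ.continuous hθ0 hθ1
  have hhc := hmemh.continuous hθ0 hθ1
  have hfc : Continuous fun y => φ y + q * ψ y := by fun_prop
  have hqψ : ∀ y, q * ψ y ≤ 2 * q₀ * C₀ := fun y => by
    have hψsup := (le_abs_self _).trans (abs_le_supNorm hψc y)
    have hφnorm : 0 ≤ fNorm θ φ := add_nonneg ENNReal.toReal_nonneg ENNReal.toReal_nonneg
    nlinarith [hψ0 y, le_max_left (supNorm ψ) 1]
  set E := Real.exp (2 * q₀ * C₀ * n)
  have hdom : ∀ g : Space A → ℝ, (∀ y, 0 ≤ g y) → ∀ x,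
      (transfer fun y => φ y + q * ψ y)^[n] g x ≤ E * (transfer φ)^[n] g x := fun g hg x =>
    iterate_transfer_le_exp_mul_iterate_transfer (fun y => by linarith [hqψ y]) hg n x
  have hlam : 1 ≤ lam q := one_le_of_one_le_transfer_one hfc hid fun x =>
    (congrFun hL1 x).ge.trans (transfer_le_transfer
      (fun y => le_add_of_nonneg_right (mul_nonneg hq0 (hψ0 y))) (fun _ => zero_le_one)
      (fun _ => le_rfl) x)
  have hψν : ∫ x, ψ x ∂ν q ≤ E * (ψt + C₀ * D * ρ ^ n) := by
    refine integral_le_of_iterate_transfer_le hfc hid hlam hψc hψ0 fun x =>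
      (hdom ψ hψ0 x).trans (mul_le_mul_of_nonneg_left ?_ (Real.exp_pos _).le)
    have hLψc : Continuous fun y => (transfer φ)^[n] ψ y - ψt :=
      (continuous_iterate_transfer hφc hψc n).sub continuous_const
    linarith [(le_abs_self _).trans ((abs_le_supNorm hLψc x).trans (hLψ n))]
  have hDρ : 0 ≤ D * ρ ^ n := mul_nonneg (by linarith) (pow_nonneg hρ.1.le n)
  have hh : ∀ x, hq q x ≤ E + D * ρ ^ n := fun x => by
    have hq1 : |q| ≤ 1 / b := (abs_of_nonneg hq0).trans_le (hqq₀.trans hq₀b)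
    refine (le_iterate_transfer_one_add_of_fNorm_sub_le hfc hlam hhc hDρ
      (hgap q hq1 _ (memF_const θ 1) n) x).trans ((add_le_add_iff_right _).2 ?_)
    simpa [Function.iterate_fixed hL1 n] using hdom (fun _ => 1) (fun _ => zero_le_one) x
  rw [integral_withDensity_ofReal hhc.measurable fun x => (hpos x).le]
  calc ∫ x, hq q x * ψ x ∂ν q ≤ (E + D * ρ ^ n) * ∫ x, ψ x ∂ν q :=
        integral_mul_le_of_le hhc hψc hψ0 hh
    _ ≤ (E + D * ρ ^ n) * (E * (ψt + C₀ * D * ρ ^ n)) := by gcongr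
    _ = E * (E + D * ρ ^ n) * (ψt + C₀ * D * ρ ^ n) := by ring

theorem statement13
    {s₀ M : ℕ} {A : Matrix (Fin s₀) (Fin s₀) ℕ} {θ : ℝ}
    (hs₀ : 2 ≤ s₀) (h01 : ∀ i j, A i j = 0 ∨ A i j = 1) (hM : 0 < M)
    (hap : ∀ i j, 0 < (A ^ M) i j) (hθ0 : 0 < θ) (hθ1 : θ < 1)
    (φ ψ : Space A → ℝ) (hφ : MemF θ φ) (hψ : MemF θ ψ)
    (hL1 : transfer φ (fun _ => 1) = fun _ => 1) (hψ0 : ∀ x, 0 ≤ ψ x)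
    (hcoh : ¬ CohomToConst ψ)
    (μ : Measure (Space A)) (hμ : IsEqm φ μ) (ψt : ℝ) (hψt : ψt = ∫ x, ψ x ∂μ)
    (b C₀ : ℝ) (hb : b = max 1 (holderNorm θ ψ))
    (hC₀ : C₀ = fNorm θ φ + 2 * max (supNorm ψ) 1)
    (lam : ℝ → ℝ) (ν : ℝ → Measure (Space A)) (hq : ℝ → Space A → ℝ)
    (hRPF : ∀ q : ℝ, IsRPF θ (fun x => φ x + q * ψ x) (lam q) (ν q) (hq q))
    (D ρ : ℝ) (hD1 : 1 ≤ D) (hρ : ρ ∈ Set.Ioo (0:ℝ) 1)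
    (hgap : ∀ q : ℝ, |q| ≤ 1 / b → ∀ g : Space A → ℝ, MemF θ g → ∀ n : ℕ,
      fNorm θ (fun x => (transfer (fun y => φ y + q * ψ y))^[n] g x / lam q ^ n
          - hq q x * ∫ y, g y ∂(ν q)) ≤ D * ρ ^ n * fNorm θ g)
    (hLψ : ∀ n : ℕ, supNorm (fun x => (transfer φ)^[n] ψ x - ψt) ≤ C₀ * D * ρ ^ n)
    (q₀ : ℝ) (hq₀pos : 0 < q₀) (hq₀b : q₀ ≤ 1 / b) :
    ∀ q ∈ Set.Icc (0 : ℝ) q₀, ∀ n : ℕ,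
      (∫ x, ψ x ∂((ν q).withDensity fun x => ENNReal.ofReal (hq q x))) ≤
        Real.exp (2 * q₀ * C₀ * n) * (Real.exp (2 * q₀ * C₀ * n) + D * ρ ^ n) *
          (ψt + C₀ * D * ρ ^ n) :=
  statement13_general hθ0 hθ1 φ ψ hφ hψ hL1 hψ0 ψt b C₀ hC₀ lam ν hq hRPF D ρ hD1 hρ hgap hLψ q₀
    hq₀b

end SFT
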